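/- For n ≥ 3, the 1-nearly edge independence number of the cycle C_n on n vertices equals ⌊(n+1)/2⌋. -/

import Mathlib

open scoped Classical

/-- Two edges (as unordered pairs) share a vertex. -/
def ShareVertex {V : Type*} (e f : Sym2 V) : Prop := ∃ v, v ∈ e ∧ v ∈ f

/-- `M` is a 1-nearly edge independent set of `G`: a set of edges of `G` containing
exactly one pair of distinct edges sharing a common vertex. -/
def IsOneNearlyEdgeIndep {V : Type*} (G : SimpleGraph V) (M : Finset (Sym2 V)) : Prop :=
  ↑M ⊆ G.edgeSet ∧
    (M.offDiag.filter fun p => ShareVertex p.1 p.2).card = 2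

/-- The 1-nearly edge independence number `α'₁(G)`: maximum cardinality of a
1-nearly edge independent set, `0` if none exists. -/
noncomputable def edgeAlpha1 {V : Type*} (G : SimpleGraph V) : ℕ :=
  sSup {k | ∃ M : Finset (Sym2 V), IsOneNearlyEdgeIndep G M ∧ M.card = k}

/-- `I` is a 1-nearly vertex independent set of `G`: exactly one pair of distinct
vertices of `I` is adjacent in `G`. -/
def IsOneNearlyVertexIndep {V : Type*} (G : SimpleGraph V) (I : Finset V) : Prop :=
  (I.offDiag.filter fun p => G.Adj p.1 p.2).card = 2

/-- The 1-nearly vertex independence number `α₁(G)`. -/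
noncomputable def vertexAlpha1 {V : Type*} (G : SimpleGraph V) : ℕ :=
  sSup {k | ∃ I : Finset V, IsOneNearlyVertexIndep G I ∧ I.card = k}

/-! Upper bound: write `d v` for the number of edges of `M` at `v`. Then `∑ d v = 2 |M|`, and
since two distinct edges meet in at most one vertex, the `d v (d v - 1)` ordered pairs of edges
meeting at `v` are different for different `v`, so `∑ d v (d v - 1) ≤ 2`. As
`2 d ≤ 2 + d (d - 1)` for every `d`, this gives `4 |M| ≤ 2 n + 2`.

Lower bound: inside the path `0 - 1 - ⋯ - (n - 1) ⊆ C_n` the edges `{2j + 1, 2j + 2}` form a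
matching avoiding `0`, and adding `{0, 1}` creates exactly one pair of edges with a common vertex,
for `1 + ⌊(n - 1) / 2⌋ = ⌊(n + 1) / 2⌋` edges in total. -/

open Finset SimpleGraph

variable {V : Type*}

lemma ShareVertex.symm {e f : Sym2 V} (h : ShareVertex e f) : ShareVertex f e :=
  let ⟨v, hve, hvf⟩ := h
  ⟨v, hvf, hve⟩

lemma shareVertex_self (e : Sym2 V) : ShareVertex e e :=
  ⟨_, e.out_fst_mem, e.out_fst_mem⟩

lemma shareVertex_mk_iff {a b c d : V} :
    ShareVertex s(a, b) s(c, d) ↔ a = c ∨ a = d ∨ b = c ∨ b = d := by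
  simp only [ShareVertex, Sym2.mem_iff]
  aesop

lemma IsOneNearlyEdgeIndep.mono {G H : SimpleGraph V} (hGH : G ≤ H) {M : Finset (Sym2 V)}
    (hM : IsOneNearlyEdgeIndep G M) : IsOneNearlyEdgeIndep H M :=
  ⟨hM.1.trans (edgeSet_mono hGH), hM.2⟩

lemma edgeAlpha1_eq_of_forall_card_le {G : SimpleGraph V} {k : ℕ}
    (hex : ∃ M, IsOneNearlyEdgeIndep G M ∧ M.card = k)
    (hle : ∀ M, IsOneNearlyEdgeIndep G M → M.card ≤ k) : edgeAlpha1 G = k :=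
  IsGreatest.csSup_eq ⟨hex, by rintro _ ⟨M, hM, rfl⟩; exact hle M hM⟩

section Counting

variable [Fintype V]

lemma sum_card_filter_mem_eq {M : Finset (Sym2 V)} (hM : ∀ e ∈ M, ¬ e.IsDiag) :
    ∑ v, #(M.filter (v ∈ ·)) = 2 * #M :=
  calc ∑ v, #(M.filter (v ∈ ·)) = ∑ e ∈ M, #(univ.filter (· ∈ e)) :=
        sum_card_bipartiteAbove_eq_sum_card_bipartiteBelow _
    _ = ∑ _e ∈ M, 2 := sum_congr rfl fun e he => by
        rw [← Sym2.card_toFinset_of_not_isDiag e (hM e he)]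
        congr 1
        ext v
        simp [Sym2.mem_toFinset]
    _ = 2 * #M := by rw [sum_const, smul_eq_mul, mul_comm]

lemma sum_card_offDiag_filter_mem_le (M : Finset (Sym2 V)) :
    ∑ v, #(M.filter (v ∈ ·)).offDiag ≤ #(M.offDiag.filter fun p => ShareVertex p.1 p.2) := by
  rw [← card_biUnion]
  · refine card_le_card fun p => ?_
    simp only [mem_biUnion, mem_offDiag, mem_filter]
    rintro ⟨v, -, ⟨he, hve⟩, ⟨hf, hvf⟩, hef⟩
    exact ⟨⟨he, hf, hef⟩, v, hve, hvf⟩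
  · intro v _ w _ hvw
    rw [Function.onFun, Finset.disjoint_left]
    rintro ⟨e, f⟩ hv hw
    simp only [mem_offDiag, mem_filter] at hv hw
    exact hv.2.2 <| ((Sym2.mem_and_mem_iff hvw).1 ⟨hv.1.2, hw.1.2⟩).trans
      ((Sym2.mem_and_mem_iff hvw).1 ⟨hv.2.1.2, hw.2.1.2⟩).symm

lemma IsOneNearlyEdgeIndep.two_mul_card_le {G : SimpleGraph V} {M : Finset (Sym2 V)}
    (hM : IsOneNearlyEdgeIndep G M) : 2 * #M ≤ Fintype.card V + 1 := by
  obtain ⟨hMG, hpairs⟩ := hM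
  have hdeg := sum_card_filter_mem_eq fun e he => G.not_isDiag_of_mem_edgeSet (hMG he)
  have hoff := sum_card_offDiag_filter_mem_le M
  simp only [offDiag_card] at hoff
  have hpoint (d : ℕ) : 2 * d ≤ 2 + (d * d - d) := by
    have := Nat.le_mul_self d
    zify [this]
    nlinarith
  have hsum := sum_le_sum fun v (_ : v ∈ univ) => hpoint #(M.filter (v ∈ ·))
  rw [← mul_sum, sum_add_distrib, sum_const, card_univ, smul_eq_mul] at hsum
  omega

end Counting

lemma isOneNearlyEdgeIndep_cons {G : SimpleGraph V} {N : Finset (Sym2 V)} {e f : Sym2 V}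
    (hN : ↑N ⊆ G.edgeSet) (hNdisj : (N : Set (Sym2 V)).Pairwise fun a b => ¬ ShareVertex a b)
    (he : e ∈ G.edgeSet) (heN : e ∉ N) (hf : f ∈ N) (hshare : ∀ g ∈ N, ShareVertex e g ↔ g = f) :
    IsOneNearlyEdgeIndep G (N.cons e heN) := by
  refine ⟨by rw [coe_cons]; exact Set.insert_subset he hN, ?_⟩
  have hef : e ≠ f := fun h => heN (h ▸ hf)
  suffices (N.cons e heN).offDiag.filter (fun p => ShareVertex p.1 p.2) = {(e, f), (f, e)} by
    rw [this, card_pair]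
    simp [hef]
  ext ⟨a, b⟩
  simp only [mem_filter, mem_offDiag, mem_cons, mem_insert, mem_singleton, Prod.mk.injEq]
  constructor
  · rintro ⟨⟨ha | ha, hb | hb, hab⟩, hs⟩
    · exact absurd (ha.trans hb.symm) hab
    · subst ha
      exact Or.inl ⟨rfl, (hshare b hb).1 hs⟩
    · subst hb
      exact Or.inr ⟨(hshare a ha).1 hs.symm, rfl⟩
    · exact absurd hs (hNdisj ha hb hab)
  · rintro (⟨rfl, rfl⟩ | ⟨rfl, rfl⟩)
    · exact ⟨⟨Or.inl rfl, Or.inr hf, hef⟩, (hshare _ hf).2 rfl⟩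
    · exact ⟨⟨Or.inr hf, Or.inl rfl, hef.symm⟩, ((hshare _ hf).2 rfl).symm⟩

section PathGraph

variable {n : ℕ}

def pathOddEdge (j : Fin ((n - 1) / 2)) : Sym2 (Fin n) :=
  s(⟨2 * j + 1, by omega⟩, ⟨2 * j + 2, by omega⟩)

lemma pathOddEdge_mem_edgeSet (j : Fin ((n - 1) / 2)) : pathOddEdge j ∈ (pathGraph n).edgeSet := by
  rw [pathOddEdge, mem_edgeSet, pathGraph_adj]
  exact Or.inl rfl

lemma shareVertex_pathOddEdge_iff {j k : Fin ((n - 1) / 2)} :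
    ShareVertex (pathOddEdge j) (pathOddEdge k) ↔ j = k := by
  rw [pathOddEdge, pathOddEdge, shareVertex_mk_iff]
  simp only [Fin.ext_iff]
  omega

lemma pathOddEdge_injective : Function.Injective (pathOddEdge (n := n)) := fun _ _ h =>
  shareVertex_pathOddEdge_iff.1 (h ▸ shareVertex_self _)

lemma exists_isOneNearlyEdgeIndep_pathGraph (hn : 3 ≤ n) :
    ∃ M, IsOneNearlyEdgeIndep (pathGraph n) M ∧ M.card = (n + 1) / 2 := by
  set N := univ.map ⟨pathOddEdge, pathOddEdge_injective (n := n)⟩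
  set e : Sym2 (Fin n) := s(⟨0, by omega⟩, ⟨1, by omega⟩)
  have hshare (k : Fin ((n - 1) / 2)) : ShareVertex e (pathOddEdge k) ↔ (k : ℕ) = 0 := by
    rw [pathOddEdge, shareVertex_mk_iff]
    simp only [Fin.ext_iff]
    omega
  have heN : e ∉ N := by
    simp only [N, mem_map, mem_univ, true_and, Function.Embedding.coeFn_mk, not_exists]
    intro k hk
    have h0 : (⟨0, by omega⟩ : Fin n) ∈ pathOddEdge k := hk ▸ Sym2.mem_mk_left _ _
    rw [pathOddEdge, Sym2.mem_iff] at h0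
    simp only [Fin.ext_iff] at h0
    omega
  refine ⟨_, isOneNearlyEdgeIndep_cons (f := pathOddEdge ⟨0, by omega⟩) ?_ ?_ ?_ heN
    (mem_map_of_mem _ (mem_univ _)) ?_, ?_⟩
  · simp only [N, coe_map, coe_univ, Set.image_univ, Set.range_subset_iff]
    exact pathOddEdge_mem_edgeSet
  · simp only [N, coe_map, coe_univ, Set.image_univ]
    rintro _ ⟨j, rfl⟩ _ ⟨k, rfl⟩ hjk
    exact fun h => hjk (congrArg _ (shareVertex_pathOddEdge_iff.1 h))
  · rw [mem_edgeSet, pathGraph_adj]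
    exact Or.inl rfl
  · simp only [N, mem_map, mem_univ, true_and, Function.Embedding.coeFn_mk, forall_exists_index]
    rintro _ k rfl
    rw [hshare, pathOddEdge_injective.eq_iff, Fin.ext_iff]
  · rw [card_cons, card_map, card_univ, Fintype.card_fin]
    omega

end PathGraph

theorem edgeAlpha1_cycleGraph {n : ℕ} (hn : 3 ≤ n) :
    edgeAlpha1 (SimpleGraph.cycleGraph n) = (n + 1) / 2 := by
  refine edgeAlpha1_eq_of_forall_card_le ?_ fun M hM => ?_
  · obtain ⟨M, hM, hcard⟩ := exists_isOneNearlyEdgeIndep_pathGraph hn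
    exact ⟨M, hM.mono pathGraph_le_cycleGraph, hcard⟩
  · have := hM.two_mul_card_le
    rw [Fintype.card_fin] at this
    omega
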